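/- arXiv:2103.14350 — 3 statements merged into one kernel-verified Lean document; each statement's English description precedes it below -/
import Mathlib

section
/- Let μ > 0, B > 0, and let (ρ_n)_{n≥0} be a sequence of positive reals with ρ_n → 0 and ∑_{n≥0} ρ_n = ∞. Let (d_n)_{n≥0} be a sequence of nonnegative real numbers satisfying d_{n+1} ≤ (1 − ρ_n μ) d_n + ρ_n² B for all n ≥ 0. Then d_n → 0 as n → ∞. -/
/-- Let `μ > 0`, `B > 0`, and `(ρ_n)` positive with `ρ_n → 0` and
`∑ ρ_n = ∞`. If `(d_n)` is a sequence of nonnegative reals with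
`d_{n+1} ≤ (1 - ρ_n μ) d_n + ρ_n² B` for all `n`, then `d_n → 0`. -/
theorem sgd_recursion_tendsto_zero (μ B : ℝ) (hμ : 0 < μ) (hB : 0 < B)
    (ρ : ℕ → ℝ) (hρ_pos : ∀ n, 0 < ρ n)
    (hρ_lim : Filter.Tendsto ρ Filter.atTop (nhds 0))
    (hρ_sum : Filter.Tendsto (fun n => ∑ i ∈ Finset.range n, ρ i) Filter.atTop Filter.atTop)
    (d : ℕ → ℝ) (hd_nonneg : ∀ n, 0 ≤ d n)
    (hrec : ∀ n, d (n + 1) ≤ (1 - ρ n * μ) * d n + (ρ n) ^ 2 * B) :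
    Filter.Tendsto d Filter.atTop (nhds 0) := by
  rw [Metric.tendsto_atTop]
  intro ε hε
  set c : ℝ := min (ε * μ / (2 * B)) (1 / μ) with hc_def
  have hc : 0 < c := lt_min (by positivity) (by positivity)
  obtain ⟨N, hN⟩ := (Metric.tendsto_atTop.mp hρ_lim) c hc
  have hρ_le : ∀ n, N ≤ n → ρ n ≤ c := by
    intro n hn
    have := hN n hn
    rw [Real.dist_eq, sub_zero, abs_of_pos (hρ_pos n)] at this
    exact this.le
  set a : ℕ → ℝ := fun n => max (d n - ε / 2) 0 with ha_def
  have ha_nonneg : ∀ n, 0 ≤ a n := fun n => le_max_right _ _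
  have ha_ge : ∀ n, d n - ε / 2 ≤ a n := fun n => le_max_left _ _
  have hfac : ∀ n, N ≤ n → 0 ≤ 1 - ρ n * μ := by
    intro n hn
    have h1 : ρ n ≤ 1 / μ := (hρ_le n hn).trans (min_le_right _ _)
    have h2 := hρ_pos n
    rw [le_div_iff₀ hμ] at h1
    linarith
  have hB2 : ∀ n, N ≤ n → ρ n ^ 2 * B ≤ ρ n * μ * (ε / 2) := by
    intro n hn
    have h1 : ρ n ≤ ε * μ / (2 * B) := (hρ_le n hn).trans (min_le_left _ _)
    have h2 := hρ_pos n
    rw [le_div_iff₀ (by positivity)] at h1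
    nlinarith
  have hstep : ∀ n, N ≤ n → a (n + 1) ≤ (1 - ρ n * μ) * a n := by
    intro n hn
    have hf := hfac n hn
    have hb := hB2 n hn
    have hr := hrec n
    have h2 := hρ_pos n
    rcases le_or_gt (d n) (ε / 2) with h | h
    · have han : a n = 0 := max_eq_right (by linarith)
      rw [han, mul_zero]
      have hdn : d (n + 1) ≤ ε / 2 := by nlinarith
      have : a (n + 1) = 0 := max_eq_right (by linarith)
      rw [this]
    · have han : a n = d n - ε / 2 := max_eq_left (by linarith)
      rw [han]
      apply max_le
      · nlinarith
      · nlinarith [hd_nonneg n]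
  set T : ℕ → ℝ := fun n => ∑ i ∈ Finset.range n, ρ i with hT_def
  have hbound : ∀ n, N ≤ n → a n ≤ a N * Real.exp (-μ * (T n - T N)) := by
    intro n hn
    induction n with
    | zero =>
      have hN0 : N = 0 := Nat.le_zero.mp hn
      subst hN0; simp
    | succ m ih =>
      rcases Nat.lt_or_ge m N with hm | hm
      · have hNe : N = m + 1 := le_antisymm hn hm
        subst hNe; simp
      · have ihm := ih hm
        have h1 := hstep m hm
        have hTsucc : T (m + 1) = T m + ρ m := by
          simp [hT_def, Finset.sum_range_succ]
        have hexp : 1 - ρ m * μ ≤ Real.exp (-(ρ m * μ)) := by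
          have := Real.add_one_le_exp (-(ρ m * μ)); linarith
        calc a (m + 1) ≤ (1 - ρ m * μ) * a m := h1
          _ ≤ Real.exp (-(ρ m * μ)) * (a N * Real.exp (-μ * (T m - T N))) :=
              mul_le_mul hexp ihm (ha_nonneg m) (Real.exp_nonneg _)
          _ = a N * Real.exp (-μ * (T (m + 1) - T N)) := by
              rw [hTsucc, show -μ * (T m + ρ m - T N)
                    = -(ρ m * μ) + -μ * (T m - T N) by ring, Real.exp_add]
              ring
  have htend : Filter.Tendsto (fun n => a N * Real.exp (-μ * (T n - T N)))
      Filter.atTop (nhds 0) := by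
    have h1 : Filter.Tendsto (fun n => T n - T N) Filter.atTop Filter.atTop :=
      Filter.tendsto_atTop_add_const_right _ (-T N) hρ_sum
    have h2 : Filter.Tendsto (fun n => -μ * (T n - T N)) Filter.atTop Filter.atBot :=
      h1.const_mul_atTop_of_neg (neg_lt_zero.mpr hμ)
    have h3 := Real.tendsto_exp_atBot.comp h2
    have h4 := h3.const_mul (a N)
    simpa using h4
  have hhalf : (0 : ℝ) < ε / 2 := by linarith
  obtain ⟨M, hM⟩ := (Metric.tendsto_atTop.mp htend) (ε / 2) hhalf
  refine ⟨max N M, fun n hn => ?_⟩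
  have hnN : N ≤ n := le_trans (le_max_left _ _) hn
  have hnM : M ≤ n := le_trans (le_max_right _ _) hn
  have h5 := hM n hnM
  rw [Real.dist_eq, sub_zero] at h5
  have h6 : a N * Real.exp (-μ * (T n - T N)) < ε / 2 := lt_of_abs_lt h5
  have h7 := hbound n hnN
  rw [Real.dist_eq, sub_zero, abs_of_nonneg (hd_nonneg n)]
  have := ha_ge n
  linarith
end

section
/- Let μ > 0, B > 0, ε > 0, and let (ρ_n)_{n≥0} be a sequence of positive reals and (d_n)_{n≥0} a sequence of nonnegative reals satisfying d_{n+1} ≤ (1 − ρ_n μ) d_n + ρ_n² B for all n ≥ 0. Then for every n such that ρ_n B ≤ με and ρ_n μ ≤ 1, one has (d_{n+1} − ε)₊ ≤ (1 − ρ_n μ)(d_n − ε)₊. -/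
/-- Let `μ > 0`, `B > 0`, `ε > 0`, `(ρ_n)` positive and `(d_n)` nonnegative with
`d_{n+1} ≤ (1 - ρ_n μ) d_n + ρ_n² B` for all `n`. Then for every `n` such that
`ρ_n B ≤ μ ε` and `ρ_n μ ≤ 1`, one has `(d_{n+1} - ε)₊ ≤ (1 - ρ_n μ)(d_n - ε)₊`. -/
theorem sgd_posPart_step_eps (μ B ε : ℝ) (hμ : 0 < μ) (hB : 0 < B) (hε : 0 < ε)
    (ρ : ℕ → ℝ) (hρ_pos : ∀ n, 0 < ρ n)
    (d : ℕ → ℝ) (hd_nonneg : ∀ n, 0 ≤ d n)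
    (hrec : ∀ n, d (n + 1) ≤ (1 - ρ n * μ) * d n + (ρ n) ^ 2 * B) :
    ∀ n, ρ n * B ≤ μ * ε → ρ n * μ ≤ 1 →
      max (d (n + 1) - ε) 0 ≤ (1 - ρ n * μ) * max (d n - ε) 0 := by
  intro n h1 h2
  have hρ := hρ_pos n
  have hfac : 0 ≤ 1 - ρ n * μ := by linarith
  have hmax : d n - ε ≤ max (d n - ε) 0 := le_max_left _ _
  have key : d (n + 1) - ε ≤ (1 - ρ n * μ) * (d n - ε) := by
    have := hrec n
    have hB' : ρ n ^ 2 * B = ρ n * (ρ n * B) := by ring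
    have : ρ n * (ρ n * B) ≤ ρ n * (μ * ε) := by
      exact mul_le_mul_of_nonneg_left h1 hρ.le
    nlinarith [hrec n]
  apply max_le
  · calc d (n + 1) - ε ≤ (1 - ρ n * μ) * (d n - ε) := key
      _ ≤ (1 - ρ n * μ) * max (d n - ε) 0 :=
        mul_le_mul_of_nonneg_left hmax hfac
  · positivity
end

section
/- Let μ > 0, ε > 0, and let (ρ_n)_{n≥0} be a sequence of positive reals and (d_n)_{n≥0} a sequence of nonnegative reals satisfying d_{n+1} ≤ (1 − ρ_n μ) d_n + ρ_n² B for all n ≥ 0, where B > 0. Suppose n ≥ 0 is such that for all ℓ ≥ n one has ρ_ℓ B ≤ με and ρ_ℓ μ ≤ 1. Then for every k ≥ 1, (d_{n+k} − ε)₊ ≤ (∏_{ℓ=n}^{n+k−1} (1 − ρ_ℓ μ)) · (d_n − ε)₊. -/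
/-- Let `μ > 0`, `ε > 0`, `B > 0`, `(ρ_n)` positive and `(d_n)` nonnegative with
`d_{n+1} ≤ (1 - ρ_n μ) d_n + ρ_n² B` for all `n`. Suppose `n` is such that for all `ℓ ≥ n`,
`ρ_ℓ B ≤ μ ε` and `ρ_ℓ μ ≤ 1`. Then for every `k ≥ 1`,
`(d_{n+k} - ε)₊ ≤ (∏_{ℓ=n}^{n+k-1} (1 - ρ_ℓ μ)) (d_n - ε)₊`. -/
theorem sgd_posPart_iterate_eps (μ B ε : ℝ) (hμ : 0 < μ) (hB : 0 < B) (hε : 0 < ε)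
    (ρ : ℕ → ℝ) (hρ_pos : ∀ n, 0 < ρ n)
    (d : ℕ → ℝ) (hd_nonneg : ∀ n, 0 ≤ d n)
    (hrec : ∀ n, d (n + 1) ≤ (1 - ρ n * μ) * d n + (ρ n) ^ 2 * B)
    (n : ℕ) (hn : ∀ ℓ, n ≤ ℓ → ρ ℓ * B ≤ μ * ε ∧ ρ ℓ * μ ≤ 1) :
    ∀ k, 1 ≤ k →
      max (d (n + k) - ε) 0 ≤
        (∏ ℓ ∈ Finset.Ico n (n + k), (1 - ρ ℓ * μ)) * max (d n - ε) 0 := by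
  have step : ∀ m, n ≤ m →
      max (d (m + 1) - ε) 0 ≤ (1 - ρ m * μ) * max (d m - ε) 0 := by
    intro m hm
    obtain ⟨h1, h2⟩ := hn m hm
    have hnn : 0 ≤ 1 - ρ m * μ := by linarith
    have key : d (m + 1) - ε ≤ (1 - ρ m * μ) * (d m - ε) := by
      have h3 : (ρ m) ^ 2 * B ≤ ρ m * (μ * ε) := by
        have := (hρ_pos m).le
        nlinarith [hρ_pos m]
      have := hrec m
      nlinarith
    have : (1 - ρ m * μ) * (d m - ε) ≤ (1 - ρ m * μ) * max (d m - ε) 0 :=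
      mul_le_mul_of_nonneg_left (le_max_left _ _) hnn
    have hpos : 0 ≤ (1 - ρ m * μ) * max (d m - ε) 0 :=
      mul_nonneg hnn (le_max_right _ _)
    exact max_le (by linarith) hpos
  intro k hk
  induction k with
  | zero => omega
  | succ k ih =>
    rcases Nat.eq_or_lt_of_le hk with h | h
    · simp only [← h]
      have := step n le_rfl
      simpa using this
    · have hk1 : 1 ≤ k := by omega
      have ih' := ih hk1
      have hstep := step (n + k) (by omega)
      have hnnk : 0 ≤ 1 - ρ (n + k) * μ := by
        have := (hn (n + k) (by omega)).2; linarith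
      calc max (d (n + (k + 1)) - ε) 0
          ≤ (1 - ρ (n + k) * μ) * max (d (n + k) - ε) 0 := by
            have : n + (k + 1) = (n + k) + 1 := by ring
            rw [this]; exact hstep
        _ ≤ (1 - ρ (n + k) * μ) *
              ((∏ ℓ ∈ Finset.Ico n (n + k), (1 - ρ ℓ * μ)) * max (d n - ε) 0) :=
            mul_le_mul_of_nonneg_left ih' hnnk
        _ = (∏ ℓ ∈ Finset.Ico n (n + (k + 1)), (1 - ρ ℓ * μ)) * max (d n - ε) 0 := by
            rw [show n + (k + 1) = (n + k) + 1 from rfl,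
              Finset.prod_Ico_succ_top (by omega)]
            ring
end
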